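/- arXiv:1105.4372 — 4 statements merged into one kernel-verified Lean document; each statement's English description precedes it below -/
import Mathlib

section
/- Let B > 1 and η > 0. Let h_t, h_{t+1}, f_t, f_{t+1} : X → ℝ with f_t = max(-B, min(B, h_t)), f_{t+1} = max(-B, min(B, h_{t+1})), and suppose |h_t(x) - h_{t+1}(x)| ≤ η for all x. Define Δ_t = f_t·(h_t - f_t) and Δ_{t+1} = f_{t+1}·(h_{t+1} - f_{t+1}). Then for every x, f_t(x)² - f_{t+1}(x)² + 2Δ_t(x) - 2Δ_{t+1}(x) + η² ≥ 2(h_t(x) - h_{t+1}(x))·f_t(x). -/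
private lemma clamp_key (B u b : ℝ) (hB : 0 < B) (hb1 : -B ≤ b) (hb2 : b ≤ B) :
    0 ≤ (u - max (-B) (min B u)) * (max (-B) (min B u) - b) := by
  rcases le_total u (-B) with h | h
  · have h1 : min B u = u := min_eq_right (by linarith)
    rw [h1, max_eq_left h]
    nlinarith
  rcases le_total B u with h2 | h2
  · rw [min_eq_left h2, max_eq_right (by linarith)]
    nlinarith
  · rw [min_eq_right h2, max_eq_right h]
    simp

private lemma clamp_lip (B u v : ℝ) :
    |max (-B) (min B u) - max (-B) (min B v)| ≤ |u - v| := by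
  have h1 : |max (-B) (min B u) - max (-B) (min B v)| ≤ max |(-B) - (-B)| |min B u - min B v| :=
    abs_max_sub_max_le_max _ _ _ _
  have h2 : |min B u - min B v| ≤ max |B - B| |u - v| := abs_min_sub_min_le_max _ _ _ _
  simp only [sub_self, abs_zero] at h1 h2
  exact (h1.trans (max_le (abs_nonneg _) le_rfl)).trans (h2.trans (max_le (abs_nonneg _) le_rfl))

theorem stmt_1 {X : Type*} (B η : ℝ) (hB : 1 < B) (hη : 0 < η)
    (ht h1 ft f1 Δt Δ1 : X → ℝ)
    (hft : ∀ x, ft x = max (-B) (min B (ht x)))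
    (hf1 : ∀ x, f1 x = max (-B) (min B (h1 x)))
    (hstep : ∀ x, |ht x - h1 x| ≤ η)
    (hΔt : ∀ x, Δt x = ft x * (ht x - ft x))
    (hΔ1 : ∀ x, Δ1 x = f1 x * (h1 x - f1 x)) :
    ∀ x, 2 * (ht x - h1 x) * ft x ≤ ft x ^ 2 - f1 x ^ 2 + 2 * Δt x - 2 * Δ1 x + η ^ 2 := by
  intro x
  have hB0 : (0:ℝ) < B := by linarith
  have hb1 : -B ≤ f1 x := by rw [hf1 x]; exact le_max_left _ _
  have hb2 : f1 x ≤ B := by rw [hf1 x]; exact max_le (by linarith) (min_le_left _ _)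
  have key : 0 ≤ (ht x - ft x) * (ft x - f1 x) := by
    rw [hft x]; exact clamp_key B (ht x) (f1 x) hB0 hb1 hb2
  have lip : |ft x - f1 x| ≤ |ht x - h1 x| := by
    rw [hft x, hf1 x]; exact clamp_lip B (ht x) (h1 x)
  have hd : |ft x - f1 x| ≤ η := lip.trans (hstep x)
  have hsq : (ft x - f1 x) ^ 2 ≤ η ^ 2 := by
    nlinarith [sq_abs (ft x - f1 x), abs_nonneg (ft x - f1 x)]
  have hmul : (f1 x - ft x) * (h1 x - ht x) ≤ |ft x - f1 x| * |ht x - h1 x| := by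
    have h : (f1 x - ft x) * (h1 x - ht x) = (ft x - f1 x) * (ht x - h1 x) := by ring
    rw [h, ← abs_mul]
    exact le_abs_self _
  rw [hΔt x, hΔ1 x]
  nlinarith [mul_le_mul_of_nonneg_left (hstep x) (abs_nonneg (ft x - f1 x)), hmul, key, hsq, sq_nonneg (η - |ft x - f1 x|), sq_abs (ft x - f1 x)]
end

section
/- Let g : X → [-1,1] on a finite set X, let η, ε > 0, and suppose a sequence of functions f_1 = h_1 = g, and for each t, h_{t+1} = h_t - η·q̄_t where q̄_t : X → [-1,1] satisfies ⟨f_t, q̄_t⟩ ≥ η, and f_{t+1} = max(-B, min(B, h_{t+1})). If the process runs for k steps, then k ≤ 1/η² and ‖h_k - f_k‖₁ ≤ 1/(2B). -/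
open Finset

noncomputable def clampB (B y : ℝ) : ℝ := max (-B) (min B y)

noncomputable def potB (B y : ℝ) : ℝ := 2 * y * clampB B y - (clampB B y) ^ 2

lemma clampB_eq_self {B y : ℝ} (h1 : -B ≤ y) (h2 : y ≤ B) : clampB B y = y := by
  rw [clampB, min_eq_right h2, max_eq_right h1]

lemma clampB_eq_of_ge {B y : ℝ} (hB : 0 < B) (h : B ≤ y) : clampB B y = B := by
  rw [clampB, min_eq_left h, max_eq_right (by linarith)]

lemma clampB_eq_of_le {B y : ℝ} (hB : 0 < B) (h : y ≤ -B) : clampB B y = -B := by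
  rw [clampB, min_eq_right (by linarith), max_eq_left (by linarith)]

lemma clampB_mem_low {B y : ℝ} : -B ≤ clampB B y := le_max_left _ _

lemma clampB_mem_high {B y : ℝ} (hB : 0 < B) : clampB B y ≤ B :=
  max_le (by linarith) (min_le_left _ _)

lemma clampB_proj {B y w : ℝ} (hB : 0 < B) (h1 : -B ≤ w) (h2 : w ≤ B) :
    (y - clampB B y) * (w - clampB B y) ≤ 0 := by
  rcases le_total y (-B) with hy | hy
  · rw [clampB_eq_of_le hB hy]
    nlinarith
  · rcases le_total B y with hy2 | hy2
    · rw [clampB_eq_of_ge hB hy2]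
      nlinarith
    · rw [clampB_eq_self hy hy2]
      simp

lemma potB_key {B : ℝ} (hB : 0 < B) (y d : ℝ) :
    potB B (y + d) ≤ potB B y + 2 * clampB B y * d + d ^ 2 := by
  set u := clampB B y with hu
  set v := clampB B (y + d) with hv
  have h3 : (y - u) * (v - u) ≤ 0 :=
    clampB_proj hB (clampB_mem_low) (clampB_mem_high hB)
  have h4 := sq_nonneg (d - (v - u))
  simp only [potB, ← hu, ← hv]
  nlinarith [h3, h4]

lemma potB_nonneg {B : ℝ} (hB : 0 < B) (y : ℝ) : 0 ≤ potB B y := by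
  have h3 : (y - clampB B y) * (0 - clampB B y) ≤ 0 :=
    clampB_proj hB (by linarith) (by linarith)
  have h4 := sq_nonneg (clampB B y)
  simp only [potB]
  nlinarith

lemma potB_abs {B : ℝ} (hB : 0 < B) (y : ℝ) :
    2 * B * |y - clampB B y| ≤ potB B y := by
  rcases le_total y (-B) with hy | hy
  · rw [potB, clampB_eq_of_le hB hy]
    rw [abs_of_nonpos (by linarith)]
    nlinarith
  · rcases le_total B y with hy2 | hy2
    · rw [potB, clampB_eq_of_ge hB hy2]
      rw [abs_of_nonneg (by linarith)]
      nlinarith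
    · rw [potB, clampB_eq_self hy hy2]
      simp
      nlinarith

theorem stmt_2 {X : Type*} [Fintype X] (B η ε : ℝ) (hB : 1 < B) (hη : 0 < η) (hε : 0 < ε)
    (g : X → ℝ) (hg : ∀ x, |g x| ≤ 1)
    (f h : ℕ → X → ℝ) (q : ℕ → X → ℝ)
    (hq : ∀ t x, |q t x| ≤ 1)
    (hf1 : f 1 = g) (hh1 : h 1 = g)
    (k : ℕ) (hk : 1 ≤ k)
    (hcorr : ∀ t, 1 ≤ t → t ≤ k → η ≤ (∑ x, f t x * q t x) / (Fintype.card X : ℝ))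
    (hstep : ∀ t x, h (t + 1) x = h t x - η * q t x)
    (htrunc : ∀ t x, f (t + 1) x = max (-B) (min B (h (t + 1) x))) :
    (k : ℝ) ≤ 1 / η ^ 2 ∧
    (∑ x, |h k x - f k x|) / (Fintype.card X : ℝ) ≤ 1 / (2 * B) := by
  have hB0 : 0 < B := by linarith
  set N : ℝ := (Fintype.card X : ℝ) with hNdef
  -- N is positive
  have hNnn : 0 ≤ N := by positivity
  have hNpos : 0 < N := by
    rcases lt_or_eq_of_le hNnn with hN | hN
    · exact hN
    · exfalso
      have h1 := hcorr 1 le_rfl hk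
      rw [← hN, div_zero] at h1
      linarith
  -- f t is the clamp of h t for t ≥ 1
  have hfc : ∀ t, 1 ≤ t → ∀ x, f t x = clampB B (h t x) := by
    intro t ht x
    match t, ht with
    | 1, _ =>
      rw [hf1, hh1]
      have := abs_le.mp (hg x)
      rw [clampB_eq_self (by linarith) (by linarith)]
    | (n+2), _ =>
      rw [htrunc (n+1) x]; rfl
  -- potential drop
  have hdrop : ∀ t, 1 ≤ t → t ≤ k →
      (∑ x, potB B (h (t+1) x)) ≤ (∑ x, potB B (h t x)) - η^2 * N := by
    intro t ht htk
    have hstep1 : ∀ x, potB B (h (t+1) x) ≤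
        potB B (h t x) + 2 * f t x * (-(η * q t x)) + (-(η * q t x))^2 := by
      intro x
      have e : h (t+1) x = h t x + (-(η * q t x)) := by rw [hstep]; ring
      rw [e, hfc t ht x]
      exact potB_key hB0 _ _
    have hsum : (∑ x, potB B (h (t+1) x)) ≤
        (∑ x, potB B (h t x)) + (-(2*η)) * (∑ x, f t x * q t x) + η^2 * N := by
      calc (∑ x, potB B (h (t+1) x))
          ≤ ∑ x, (potB B (h t x) + 2 * f t x * (-(η * q t x)) + (-(η * q t x))^2) :=
            Finset.sum_le_sum (fun x _ => hstep1 x)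
        _ = (∑ x, potB B (h t x)) + (∑ x, 2 * f t x * (-(η * q t x)))
              + (∑ x, (-(η * q t x))^2) := by
            rw [Finset.sum_add_distrib, Finset.sum_add_distrib]
        _ ≤ (∑ x, potB B (h t x)) + (-(2*η)) * (∑ x, f t x * q t x) + η^2 * N := by
            have e1 : (∑ x, 2 * f t x * (-(η * q t x)))
                = (-(2*η)) * (∑ x, f t x * q t x) := by
              rw [Finset.mul_sum]
              exact Finset.sum_congr rfl (fun x _ => by ring)
            have e2 : (∑ x, (-(η * q t x))^2) ≤ η^2 * N := by
              calc (∑ x, (-(η * q t x))^2) ≤ ∑ _x : X, η^2 * 1 := by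
                    apply Finset.sum_le_sum
                    intro x _
                    have hq2 : (q t x)^2 ≤ 1 := by
                      have := abs_le.mp (hq t x); nlinarith
                    nlinarith [sq_nonneg η]
                _ = η^2 * N := by
                    rw [Finset.sum_const, nsmul_eq_mul, Finset.card_univ, hNdef]; ring
            linarith
    have hS : η * N ≤ (∑ x, f t x * q t x) := by
      have := hcorr t ht htk
      rw [le_div_iff₀ hNpos] at this
      linarith
    nlinarith [hsum, hS, hη]
  -- potential at time 1 is at most N
  have hΦ1 : (∑ x, potB B (h 1 x)) ≤ N := by
    calc (∑ x, potB B (h 1 x)) ≤ ∑ _x : X, (1:ℝ) := by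
          apply Finset.sum_le_sum
          intro x _
          have hgx := abs_le.mp (hg x)
          rw [hh1, potB, clampB_eq_self (by linarith) (by linarith)]
          nlinarith
      _ = N := by rw [Finset.sum_const, nsmul_eq_mul, Finset.card_univ, hNdef]; ring
  -- inductive potential bound
  have hΦ : ∀ t, 1 ≤ t → t ≤ k + 1 →
      (∑ x, potB B (h t x)) + ((t:ℝ) - 1) * (η^2 * N) ≤ ∑ x, potB B (h 1 x) := by
    intro t ht
    induction t, ht using Nat.le_induction with
    | base => intro _; norm_num
    | succ t ht ih =>
      intro htk
      have h1 : t ≤ k := by omega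
      have h2 := hdrop t ht h1
      have h3 := ih (by omega)
      push_cast
      linarith
  have hΦpos : ∀ t, 0 ≤ ∑ x, potB B (h t x) :=
    fun t => Finset.sum_nonneg (fun x _ => potB_nonneg hB0 _)
  constructor
  · -- k ≤ 1/η²
    have h1 := hΦ (k+1) (by omega) le_rfl
    have h2 := hΦpos (k+1)
    have hkη : (k:ℝ) * η^2 * N ≤ 1 * N := by push_cast at h1; nlinarith
    have hkη2 : (k:ℝ) * η^2 ≤ 1 := le_of_mul_le_mul_right (by linarith) hNpos
    rw [le_div_iff₀ (by positivity)]
    linarith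
  · -- ℓ¹ bound
    have hΦk : (∑ x, potB B (h k x)) ≤ N := by
      have h1 := hΦ k hk (by omega)
      have hk1 : (1:ℝ) ≤ (k:ℝ) := by exact_mod_cast hk
      have hnn : (0:ℝ) ≤ ((k:ℝ) - 1) * (η^2 * N) := mul_nonneg (by linarith) (by positivity)
      linarith
    have habs : 2 * B * (∑ x, |h k x - f k x|) ≤ ∑ x, potB B (h k x) := by
      rw [Finset.mul_sum]
      apply Finset.sum_le_sum
      intro x _
      rw [hfc k hk x]
      exact potB_abs hB0 _
    rw [div_le_div_iff₀ hNpos (by positivity : (0:ℝ) < 2 * B)]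
    linarith
end

section
/- (Bogolyubov-type lemma) Let h : 𝔽₂ⁿ → {0,1} with 𝔼h ≥ ρ, and let K = {α : |ĥ(α)| ≥ ρ^{3/2}/2}. Let V = {x ∈ 𝔽₂ⁿ : ⟨α, x⟩ = 0 for all α ∈ K}. Then |K| ≤ 4ρ^{-3}, so V has codimension at most 4ρ^{-3}, and for every x ∈ V, the 4-fold convolution satisfies h∗h∗h∗h(x) ≥ ρ⁴/2 > 0. -/
/-! By Fourier inversion and the convolution identity, `h∗h∗h∗h(x) = Σ_α ĥ(α)⁴ χ_α(x)`.
Since `h` is `{0,1}`-valued, Parseval gives `Σ_α ĥ(α)² = 𝔼h = ĥ(0) =: μ ≤ 1`, so at most `4ρ⁻³`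
frequencies have `|ĥ(α)| ≥ c := ρ^{3/2}/2`. For `x ∈ V` all of these characters equal `1` at `x`,
so their terms add up to at least `ĥ(0)⁴ = μ⁴`, while every other term has `ĥ(α)⁴ ≤ c² ĥ(α)²`,
hence the remaining terms total at least `-c² μ = -ρ³μ/4`. With `μ ≥ ρ` this gives
`μ⁴ - ρ³μ/4 ≥ 3ρ⁴/4`. -/

open Finset Matrix

noncomputable def chi : ZMod 2 → ℝ := fun a => (-1 : ℝ) ^ a.val

noncomputable def fhat {n : ℕ} (h : (Fin n → ZMod 2) → ℝ) (α : Fin n → ZMod 2) : ℝ :=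
  (∑ x : Fin n → ZMod 2, h x * chi (dotProduct α x))
    / (Fintype.card (Fin n → ZMod 2) : ℝ)

noncomputable def conv {n : ℕ} (g h : (Fin n → ZMod 2) → ℝ) : (Fin n → ZMod 2) → ℝ :=
  fun x => (∑ y : Fin n → ZMod 2, g y * h (x - y)) / (Fintype.card (Fin n → ZMod 2) : ℝ)

theorem card_filter_le_abs_mul_sq_le_sum_sq {ι : Type*} [Fintype ι] (a : ι → ℝ) {c : ℝ}
    (hc : 0 ≤ c) : (#{i | c ≤ |a i|} : ℝ) * c ^ 2 ≤ ∑ i, a i ^ 2 := by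
  classical
  calc (#{i | c ≤ |a i|} : ℝ) * c ^ 2 ≤ ∑ i ∈ {i | c ≤ |a i|}, a i ^ 2 := by
        rw [← nsmul_eq_mul]
        refine card_nsmul_le_sum _ _ _ fun i hi => ?_
        rw [← sq_abs (a i)]
        exact pow_le_pow_left₀ hc (mem_filter.mp hi).2 2
    _ ≤ ∑ i, a i ^ 2 := sum_le_sum_of_subset_of_nonneg (subset_univ _) fun i _ _ => sq_nonneg _

theorem pow_four_sub_mul_sum_sq_le_sum_pow_four_mul {ι : Type*} [Fintype ι]
    (a s : ι → ℝ) {t : ℝ} (ht : 0 ≤ t) (hs : ∀ i, |s i| ≤ 1)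
    (hlarge : ∀ i, t ≤ a i ^ 2 → s i = 1) (i₀ : ι) (hi₀ : s i₀ = 1) :
    a i₀ ^ 4 - t * ∑ i, a i ^ 2 ≤ ∑ i, a i ^ 4 * s i := by
  classical
  have hterm : ∀ i, (if i = i₀ then a i ^ 4 else 0) - t * a i ^ 2 ≤ a i ^ 4 * s i := by
    intro i
    have ha2 := sq_nonneg (a i)
    split_ifs with hi
    · subst hi; rw [hi₀]; nlinarith
    · by_cases hti : t ≤ a i ^ 2
      · rw [hlarge i hti]; nlinarith
      · have hs1 : 0 ≤ s i + 1 := by linarith [(abs_le.mp (hs i)).1]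
        nlinarith [mul_nonneg (pow_nonneg ha2 2) hs1,
          mul_nonneg ha2 (sub_nonneg.mpr (not_le.mp hti).le)]
  calc a i₀ ^ 4 - t * ∑ i, a i ^ 2
      = ∑ i, ((if i = i₀ then a i ^ 4 else 0) - t * a i ^ 2) := by
        rw [sum_sub_distrib, sum_ite_eq', if_pos (mem_univ _), mul_sum]
    _ ≤ ∑ i, a i ^ 4 * s i := sum_le_sum fun i _ => hterm i

theorem sq_rpow_three_halves {x : ℝ} (hx : 0 ≤ x) : (x ^ ((3 : ℝ) / 2)) ^ 2 = x ^ 3 := by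
  rw [← Real.rpow_natCast, ← Real.rpow_mul hx]
  norm_num

theorem chi_zero : chi 0 = 1 := by simp [chi]

theorem chi_add (a b : ZMod 2) : chi (a + b) = chi a * chi b := by
  rw [chi, chi, chi, ZMod.val_add, ← neg_one_pow_eq_pow_mod_two, pow_add]

theorem chi_neg (a : ZMod 2) : chi (-a) = chi a := by
  rw [ZMod.neg_eq_self_mod_two]

theorem chi_one : chi 1 = -1 := by simp [chi, ZMod.val_one]

theorem abs_chi (a : ZMod 2) : |chi a| = 1 := by simp [chi]

section Fourier

variable {n : ℕ}

theorem chi_dotProduct_add (α x y : Fin n → ZMod 2) :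
    chi (α ⬝ᵥ (x + y)) = chi (α ⬝ᵥ x) * chi (α ⬝ᵥ y) := by
  rw [dotProduct_add, chi_add]

theorem chi_dotProduct_sub (α x y : Fin n → ZMod 2) :
    chi (α ⬝ᵥ (x - y)) = chi (α ⬝ᵥ x) * chi (α ⬝ᵥ y) := by
  rw [dotProduct_sub, sub_eq_add_neg, chi_add, chi_neg]

theorem sum_chi_dotProduct (α : Fin n → ZMod 2) :
    ∑ x : Fin n → ZMod 2, chi (α ⬝ᵥ x) =
      if α = 0 then (Fintype.card (Fin n → ZMod 2) : ℝ) else 0 := by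
  split_ifs with hα
  · simp [hα, chi_zero]
  obtain ⟨i, hi⟩ : ∃ i, α i ≠ 0 := Function.ne_iff.mp hα
  have hv : α ⬝ᵥ Pi.single i 1 = 1 := by
    rw [dotProduct_single, mul_one]
    exact (by decide : ∀ a : ZMod 2, a ≠ 0 → a = 1) _ hi
  -- translating by `Pi.single i 1` flips the sign of every term
  have hshift := Equiv.sum_comp (Equiv.addRight (Pi.single i 1 : Fin n → ZMod 2))
    fun x => chi (α ⬝ᵥ x)
  simp only [Equiv.coe_addRight, chi_dotProduct_add, hv, chi_one, mul_neg_one,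
    sum_neg_distrib] at hshift
  linarith

theorem sum_chi_dotProduct_left (x : Fin n → ZMod 2) :
    ∑ α : Fin n → ZMod 2, chi (α ⬝ᵥ x) =
      if x = 0 then (Fintype.card (Fin n → ZMod 2) : ℝ) else 0 := by
  simp_rw [dotProduct_comm _ x]
  exact sum_chi_dotProduct x

theorem sum_fhat_mul_chi (h : (Fin n → ZMod 2) → ℝ) (x : Fin n → ZMod 2) :
    ∑ α, fhat h α * chi (α ⬝ᵥ x) = h x := by
  simp only [fhat, div_mul_eq_mul_div, ← sum_div, sum_mul]
  rw [sum_comm]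
  simp only [mul_assoc, ← chi_dotProduct_sub, ← mul_sum, sum_chi_dotProduct_left, sub_eq_zero,
    mul_ite, mul_zero, sum_ite_eq', mem_univ, if_true]
  exact mul_div_cancel_right₀ _ (by positivity)

theorem fhat_conv (g f : (Fin n → ZMod 2) → ℝ) (α : Fin n → ZMod 2) :
    fhat (conv g f) α = fhat g α * fhat f α := by
  have hshift : ∀ y, ∑ x, f (x - y) * chi (α ⬝ᵥ x) = chi (α ⬝ᵥ y) * ∑ z, f z * chi (α ⬝ᵥ z) := by
    intro y
    rw [mul_sum]
    refine (Fintype.sum_equiv (Equiv.addRight y) _ _ fun z => ?_).symm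
    rw [Equiv.coe_addRight, add_sub_cancel_right, chi_dotProduct_add]
    ring
  simp only [fhat, conv, div_mul_eq_mul_div, ← sum_div, sum_mul, mul_assoc]
  rw [sum_comm]
  simp only [← mul_sum, hshift, mul_div_assoc', ← sum_div]

theorem sum_fhat_sq (h : (Fin n → ZMod 2) → ℝ) :
    ∑ α, fhat h α ^ 2 = (∑ x, h x ^ 2) / (Fintype.card (Fin n → ZMod 2) : ℝ) := by
  calc ∑ α, fhat h α ^ 2 = ∑ α, fhat h α * fhat h α := by simp only [sq]
    _ = (∑ x, h x * ∑ α, fhat h α * chi (α ⬝ᵥ x)) / (Fintype.card (Fin n → ZMod 2) : ℝ) := by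
        conv_lhs => enter [2, α, 2]; rw [fhat]
        simp only [mul_div_assoc', ← sum_div, mul_sum]
        rw [sum_comm]
        simp only [mul_left_comm]
    _ = (∑ x, h x ^ 2) / (Fintype.card (Fin n → ZMod 2) : ℝ) := by
        simp only [sum_fhat_mul_chi, sq]

theorem fhat_zero (h : (Fin n → ZMod 2) → ℝ) :
    fhat h 0 = (∑ x, h x) / (Fintype.card (Fin n → ZMod 2) : ℝ) := by
  simp [fhat, chi_zero]

theorem conv_conv_conv_self_eq_sum (h : (Fin n → ZMod 2) → ℝ) (x : Fin n → ZMod 2) :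
    conv (conv (conv h h) h) h x = ∑ α, fhat h α ^ 4 * chi (α ⬝ᵥ x) := by
  rw [← sum_fhat_mul_chi (conv (conv (conv h h) h) h) x]
  simp only [fhat_conv]
  ring_nf

theorem sum_fhat_sq_eq_fhat_zero {h : (Fin n → ZMod 2) → ℝ} (hval : ∀ x, h x = 0 ∨ h x = 1) :
    ∑ α, fhat h α ^ 2 = fhat h 0 := by
  rw [sum_fhat_sq, fhat_zero]
  congr 2 with x
  rcases hval x with hx | hx <;> simp [hx]

theorem fhat_zero_le_one {h : (Fin n → ZMod 2) → ℝ} (hle : ∀ x, h x ≤ 1) : fhat h 0 ≤ 1 := by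
  rw [fhat_zero, div_le_one (by positivity)]
  calc ∑ x, h x ≤ ∑ _x : Fin n → ZMod 2, (1 : ℝ) := sum_le_sum fun x _ => hle x
    _ = Fintype.card (Fin n → ZMod 2) := by simp

theorem ncard_setOf_le_abs_fhat_mul_sq_le (h : (Fin n → ZMod 2) → ℝ) {c : ℝ} (hc : 0 ≤ c) :
    ({α | c ≤ |fhat h α|}.ncard : ℝ) * c ^ 2 ≤ ∑ α, fhat h α ^ 2 := by
  rw [Set.ncard_eq_toFinset_card', Set.toFinset_ofPred]
  exact card_filter_le_abs_mul_sq_le_sum_sq (fhat h) hc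

theorem fhat_zero_pow_four_sub_le_conv_conv_conv_self (h : (Fin n → ZMod 2) → ℝ) {c : ℝ}
    {x : Fin n → ZMod 2} (hx : ∀ α, c ≤ |fhat h α| → α ⬝ᵥ x = 0) :
    fhat h 0 ^ 4 - c ^ 2 * ∑ α, fhat h α ^ 2 ≤ conv (conv (conv h h) h) h x := by
  rw [conv_conv_conv_self_eq_sum]
  refine pow_four_sub_mul_sum_sq_le_sum_pow_four_mul (fhat h) (fun α => chi (α ⬝ᵥ x))
    (sq_nonneg c) (fun α => (abs_chi _).le) (fun α hα => ?_) 0 (by rw [zero_dotProduct, chi_zero])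
  rw [hx α ((le_abs_self c).trans (sq_le_sq.mp hα)), chi_zero]

end Fourier

theorem stmt_7 {n : ℕ} (ρ : ℝ) (hρ : 0 < ρ)
    (h : (Fin n → ZMod 2) → ℝ) (hval : ∀ x, h x = 0 ∨ h x = 1)
    (hmean : ρ ≤ (∑ x : Fin n → ZMod 2, h x) / (Fintype.card (Fin n → ZMod 2) : ℝ))
    (K : Set (Fin n → ZMod 2))
    (hK : K = {α | ρ ^ ((3 : ℝ) / 2) / 2 ≤ |fhat h α|})
    (V : Set (Fin n → ZMod 2))
    (hV : V = {x | ∀ α ∈ K, dotProduct α x = 0}) :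
    (K.ncard : ℝ) ≤ 4 / ρ ^ 3 ∧
    ∀ x ∈ V, ρ ^ 4 / 2 ≤ conv (conv (conv h h) h) h x ∧ 0 < conv (conv (conv h h) h) h x := by
  subst hK hV
  set c := ρ ^ ((3 : ℝ) / 2) / 2
  have hc_sq : c ^ 2 = ρ ^ 3 / 4 := by rw [div_pow, sq_rpow_three_halves hρ.le]; norm_num
  have hparseval := sum_fhat_sq_eq_fhat_zero hval
  rw [← fhat_zero] at hmean
  refine ⟨?_, fun x hx => ?_⟩
  · have hcard := ncard_setOf_le_abs_fhat_mul_sq_le h (by positivity : 0 ≤ c)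
    have hle_one := fhat_zero_le_one (h := h) fun x => by
      rcases hval x with hx | hx <;> norm_num [hx]
    rw [le_div_iff₀ (by positivity)]
    nlinarith
  · have hlower := fhat_zero_pow_four_sub_le_conv_conv_conv_self h (c := c) hx
    rw [hparseval, hc_sq] at hlower
    have hbound : ρ ^ 4 / 2 ≤ conv (conv (conv h h) h) h x := by
      nlinarith [mul_le_mul_of_nonneg_left (pow_le_pow_left₀ hρ.le hmean 3) (hρ.le.trans hmean)]
    exact ⟨hbound, lt_of_lt_of_le (by positivity) hbound⟩
end

section
/- Let A ⊆ 𝔽₂ⁿ be a set such that every element of A is a 4-fold sum of elements from a set S on which a function φ : S → 𝔽₂ⁿ is a Freiman homomorphism of order 8, and suppose 0 ∈ A and A is closed under addition (a subspace). Define ζ on A by ζ(x₁+x₂+x₃+x₄) = φ(x₁)+φ(x₂)+φ(x₃)+φ(x₄) for any representation with xᵢ ∈ S. Then ζ is well-defined and is a group homomorphism (linear map) on A: ζ(0) = 0 and ζ(x+y) = ζ(x)+ζ(y) for all x, y ∈ A. -/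
open Finset

private lemma sum_eight_aux {M : Type*} [AddCommMonoid M] (a b c d e f g h : M) :
    ∑ i, (![a, b, c, d, e, f, g, h] : Fin 8 → M) i = a + b + c + d + e + f + g + h := by
  have e5 : (![a, b, c, d, e, f, g, h] : Fin 8 → M) 5 = f := rfl
  have e6 : (![a, b, c, d, e, f, g, h] : Fin 8 → M) 6 = g := rfl
  have e7 : (![a, b, c, d, e, f, g, h] : Fin 8 → M) 7 = h := rfl
  simp [Fin.sum_univ_eight, e5, e6, e7]

theorem stmt_12 {n : ℕ} (S : Set (Fin n → ZMod 2))
    (φ : (Fin n → ZMod 2) → (Fin n → ZMod 2))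
    (hφ : ∀ x x' : Fin 8 → (Fin n → ZMod 2), (∀ i, x i ∈ S) → (∀ i, x' i ∈ S) →
        ∑ i, x i = ∑ i, x' i → ∑ i, φ (x i) = ∑ i, φ (x' i))
    (A : Set (Fin n → ZMod 2))
    (hA4 : ∀ a ∈ A, ∃ x₁ ∈ S, ∃ x₂ ∈ S, ∃ x₃ ∈ S, ∃ x₄ ∈ S, a = x₁ + x₂ + x₃ + x₄)
    (hA0 : (0 : Fin n → ZMod 2) ∈ A)
    (hAadd : ∀ a ∈ A, ∀ b ∈ A, a + b ∈ A) :
    ∃ ζ : (Fin n → ZMod 2) → (Fin n → ZMod 2),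
      (∀ x₁ ∈ S, ∀ x₂ ∈ S, ∀ x₃ ∈ S, ∀ x₄ ∈ S, x₁ + x₂ + x₃ + x₄ ∈ A →
        ζ (x₁ + x₂ + x₃ + x₄) = φ x₁ + φ x₂ + φ x₃ + φ x₄) ∧
      ζ 0 = 0 ∧ (∀ a ∈ A, ∀ b ∈ A, ζ (a + b) = ζ a + ζ b) := by
  classical
  obtain ⟨s, hs, -⟩ := hA4 0 hA0
  have h2 : ∀ v : Fin n → ZMod 2, v + v = 0 := fun v => by
    funext i; exact CharTwo.add_self_eq_zero _
  have key8 : ∀ x₁ ∈ S, ∀ x₂ ∈ S, ∀ x₃ ∈ S, ∀ x₄ ∈ S, ∀ y₁ ∈ S, ∀ y₂ ∈ S, ∀ y₃ ∈ S,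
      ∀ y₄ ∈ S, ∀ z₁ ∈ S, ∀ z₂ ∈ S, ∀ z₃ ∈ S, ∀ z₄ ∈ S,
      x₁ + x₂ + x₃ + x₄ + (y₁ + y₂ + y₃ + y₄) = z₁ + z₂ + z₃ + z₄ →
      φ x₁ + φ x₂ + φ x₃ + φ x₄ + (φ y₁ + φ y₂ + φ y₃ + φ y₄)
        = φ z₁ + φ z₂ + φ z₃ + φ z₄ := by
    intro x₁ hx1 x₂ hx2 x₃ hx3 x₄ hx4 y₁ hy1 y₂ hy2 y₃ hy3 y₄ hy4
      z₁ hz1 z₂ hz2 z₃ hz3 z₄ hz4 hsum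
    have h := hφ ![x₁, x₂, x₃, x₄, y₁, y₂, y₃, y₄] ![z₁, z₂, z₃, z₄, s, s, s, s]
      (by intro i; fin_cases i <;> assumption)
      (by intro i; fin_cases i <;> assumption)
      (by
        rw [sum_eight_aux, sum_eight_aux]
        linear_combination hsum - 2 * h2 s)
    have hl : ∑ i, φ (![x₁, x₂, x₃, x₄, y₁, y₂, y₃, y₄] i)
        = φ x₁ + φ x₂ + φ x₃ + φ x₄ + φ y₁ + φ y₂ + φ y₃ + φ y₄ := by
      have : (fun i => φ (![x₁, x₂, x₃, x₄, y₁, y₂, y₃, y₄] i))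
          = ![φ x₁, φ x₂, φ x₃, φ x₄, φ y₁, φ y₂, φ y₃, φ y₄] := by
        funext i; fin_cases i <;> rfl
      rw [show (∑ i, φ (![x₁, x₂, x₃, x₄, y₁, y₂, y₃, y₄] i))
          = ∑ i, (![φ x₁, φ x₂, φ x₃, φ x₄, φ y₁, φ y₂, φ y₃, φ y₄] : Fin 8 → _) i from
          by rw [← this], sum_eight_aux]
    have hr : ∑ i, φ (![z₁, z₂, z₃, z₄, s, s, s, s] i)
        = φ z₁ + φ z₂ + φ z₃ + φ z₄ + φ s + φ s + φ s + φ s := by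
      have : (fun i => φ (![z₁, z₂, z₃, z₄, s, s, s, s] i))
          = ![φ z₁, φ z₂, φ z₃, φ z₄, φ s, φ s, φ s, φ s] := by
        funext i; fin_cases i <;> rfl
      rw [show (∑ i, φ (![z₁, z₂, z₃, z₄, s, s, s, s] i))
          = ∑ i, (![φ z₁, φ z₂, φ z₃, φ z₄, φ s, φ s, φ s, φ s] : Fin 8 → _) i from
          by rw [← this], sum_eight_aux]
    rw [hl, hr] at h
    linear_combination h + 2 * h2 (φ s)
  have key4 : ∀ x₁ ∈ S, ∀ x₂ ∈ S, ∀ x₃ ∈ S, ∀ x₄ ∈ S, ∀ z₁ ∈ S, ∀ z₂ ∈ S, ∀ z₃ ∈ S,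
      ∀ z₄ ∈ S, x₁ + x₂ + x₃ + x₄ = z₁ + z₂ + z₃ + z₄ →
      φ x₁ + φ x₂ + φ x₃ + φ x₄ = φ z₁ + φ z₂ + φ z₃ + φ z₄ := by
    intro x₁ hx1 x₂ hx2 x₃ hx3 x₄ hx4 z₁ hz1 z₂ hz2 z₃ hz3 z₄ hz4 hsum
    have h := key8 x₁ hx1 x₂ hx2 x₃ hx3 x₄ hx4 s hs s hs s hs s hs z₁ hz1 z₂ hz2 z₃ hz3 z₄ hz4
      (by linear_combination hsum + 2 * h2 s)
    linear_combination h - 2 * h2 (φ s)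
  choose f₁ hf₁ f₂ hf₂ f₃ hf₃ f₄ hf₄ hrep using hA4
  refine ⟨fun a => if h : a ∈ A then
      φ (f₁ a h) + φ (f₂ a h) + φ (f₃ a h) + φ (f₄ a h) else 0, ?_, ?_, ?_⟩
  · intro x₁ hx1 x₂ hx2 x₃ hx3 x₄ hx4 hmem
    simp only [dif_pos hmem]
    exact key4 _ (hf₁ _ hmem) _ (hf₂ _ hmem) _ (hf₃ _ hmem) _ (hf₄ _ hmem)
      x₁ hx1 x₂ hx2 x₃ hx3 x₄ hx4 (hrep _ hmem).symm
  · simp only [dif_pos hA0]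
    have h := key4 _ (hf₁ _ hA0) _ (hf₂ _ hA0) _ (hf₃ _ hA0) _ (hf₄ _ hA0)
      s hs s hs s hs s hs (by linear_combination (hrep _ hA0).symm - 2 * h2 s)
    linear_combination h + 2 * h2 (φ s)
  · intro a ha b hb
    have hab := hAadd a ha b hb
    simp only [dif_pos hab, dif_pos ha, dif_pos hb]
    have h := key8 _ (hf₁ _ ha) _ (hf₂ _ ha) _ (hf₃ _ ha) _ (hf₄ _ ha)
      _ (hf₁ _ hb) _ (hf₂ _ hb) _ (hf₃ _ hb) _ (hf₄ _ hb)
      _ (hf₁ _ hab) _ (hf₂ _ hab) _ (hf₃ _ hab) _ (hf₄ _ hab)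
      (by linear_combination (hrep _ hab) - (hrep _ ha) - (hrep _ hb))
    linear_combination h.symm
end
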